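/- arXiv:2310.02817 — 8 statements merged into one kernel-verified Lean document; each statement's English description precedes it below -/
import Mathlib

section
/- Let A be a strictly lower triangular s×s real matrix and b ∈ ℝ^s, with c = A·e where e is the all-ones vector. Suppose A ≥ 0 and b ≥ 0 entrywise, and suppose the weak-stage-order-2 conditions b^T A^k (A c - ½ c²) = 0 hold for all k ≥ 0 (where c² is the entrywise square). Then b^T A = 0. -/
open Matrix

/-- For an explicit RK method (`A` strictly lower triangular) with `A ≥ 0`, `b ≥ 0`,
`c = A e`, satisfying the weak-stage-order-2 conditions
`bᵀ Aᵏ (A c - ½ c²) = 0` for all `k ≥ 0`, one has `bᵀ A = 0`. -/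
theorem vecMul_eq_zero_of_nonneg_wso2 (s : ℕ)
    (A : Matrix (Fin s) (Fin s) ℝ) (b : Fin s → ℝ)
    (hA : ∀ i j : Fin s, i ≤ j → A i j = 0)
    (hApos : ∀ i j, 0 ≤ A i j) (hbpos : ∀ i, 0 ≤ b i)
    (c : Fin s → ℝ) (hc : c = A *ᵥ (1 : Fin s → ℝ))
    (hwso : ∀ k : ℕ, (b ᵥ* A ^ k) ⬝ᵥ (A *ᵥ c - (1 / 2 : ℝ) • (c ^ 2)) = 0) :
    b ᵥ* A = 0 := by
  -- nonnegativity of b Aᵏ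
  have hw : ∀ k (j : Fin s), 0 ≤ (b ᵥ* A ^ k) j := by
    intro k
    induction k with
    | zero => intro j; simpa using hbpos j
    | succ k ih =>
      intro j
      rw [pow_succ, ← vecMul_vecMul]
      rw [show (b ᵥ* A ^ k ᵥ* A) j = ∑ i, (b ᵥ* A ^ k) i * A i j from rfl]
      exact Finset.sum_nonneg fun i _ => mul_nonneg (ih i) (hApos i j)
  -- entries of powers vanish
  have hpow : ∀ k (i j : Fin s), (i : ℕ) < (j : ℕ) + k → (A ^ k) i j = 0 := by
    intro k
    induction k with
    | zero =>
      intro i j h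
      have hne : i ≠ j := by
        intro hij; subst hij; omega
      simp [Matrix.one_apply, hne]
    | succ k ih =>
      intro i j h
      rw [pow_succ, Matrix.mul_apply]
      apply Finset.sum_eq_zero
      intro l _
      by_cases hl : (i : ℕ) < (l : ℕ) + k
      · rw [ih i l hl, zero_mul]
      · have : l ≤ j := Fin.le_def.mpr (by omega)
        rw [hA l j this, mul_zero]
  have hAs : A ^ s = 0 := by
    ext i j
    exact hpow s i j (by have := i.isLt; omega)
  -- the recurrence  b Aᵏ⁺¹ ⬝ c = ½ (b Aᵏ ⬝ c²)
  have hrec : ∀ k : ℕ, (b ᵥ* A ^ (k + 1)) ⬝ᵥ c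
      = (1 / 2 : ℝ) * ((b ᵥ* A ^ k) ⬝ᵥ (c ^ 2)) := by
    intro k
    have h := hwso k
    rw [dotProduct_sub, dotProduct_smul, smul_eq_mul, sub_eq_zero] at h
    rw [pow_succ, ← vecMul_vecMul, ← dotProduct_mulVec, h]
  -- downward induction: b Aᵏ ⬝ c² = 0 for all k
  have step : ∀ k : ℕ, (b ᵥ* A ^ (k + 1)) ⬝ᵥ (c ^ 2) = 0 →
      (b ᵥ* A ^ k) ⬝ᵥ (c ^ 2) = 0 := by
    intro k hk1
    have hterm : ∀ j : Fin s, (b ᵥ* A ^ (k + 1)) j * (c ^ 2) j = 0 := by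
      have := (Finset.sum_eq_zero_iff_of_nonneg (fun j _ =>
        mul_nonneg (hw (k + 1) j) (by simpa [Pi.pow_apply] using sq_nonneg (c j)))).mp hk1
      intro j; exact this j (Finset.mem_univ j)
    have hdot : (b ᵥ* A ^ (k + 1)) ⬝ᵥ c = 0 := by
      apply Finset.sum_eq_zero
      intro j _
      have := hterm j
      rw [Pi.pow_apply] at this
      rcases eq_or_ne (c j) 0 with h0 | h0
      · rw [h0, mul_zero]
      · have : (b ᵥ* A ^ (k + 1)) j = 0 := by
          rcases mul_eq_zero.mp this with h | h
          · exact h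
          · exact absurd (pow_eq_zero_iff (n := 2) (by norm_num) |>.mp h) h0
        rw [this, zero_mul]
    have := hrec k
    rw [hdot] at this
    linarith
  have descend : ∀ n k : ℕ, (b ᵥ* A ^ (k + n)) ⬝ᵥ (c ^ 2) = 0 →
      (b ᵥ* A ^ k) ⬝ᵥ (c ^ 2) = 0 := by
    intro n
    induction n with
    | zero => intro k h; simpa using h
    | succ n ih =>
      intro k h
      exact ih k (step (k + n) (by rw [show k + n + 1 = k + (n + 1) by omega]; exact h))
  have hT0 : b ⬝ᵥ (c ^ 2) = 0 := by
    have := descend s 0 (by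
      rw [zero_add, hAs, vecMul_zero, zero_dotProduct])
    simpa using this
  -- each bᵢ cᵢ² = 0
  have hbc : ∀ i, b i * (c i) ^ 2 = 0 := by
    have := (Finset.sum_eq_zero_iff_of_nonneg (fun i _ =>
      mul_nonneg (hbpos i) (by simpa [Pi.pow_apply] using sq_nonneg (c i)))).mp hT0
    intro i
    have h := this i (Finset.mem_univ i)
    simpa [Pi.pow_apply] using h
  -- rows with bᵢ ≠ 0 are zero rows
  have hrow : ∀ i j, b i ≠ 0 → A i j = 0 := by
    intro i j hb
    have hci : c i = 0 := by
      have := hbc i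
      rcases mul_eq_zero.mp this with h | h
      · exact absurd h hb
      · exact pow_eq_zero_iff (n := 2) (by norm_num) |>.mp h
    have hsum : ∑ l, A i l = 0 := by
      have : c i = ∑ l, A i l * 1 := by rw [hc]; rfl
      simpa [hci] using this.symm
    have := (Finset.sum_eq_zero_iff_of_nonneg (fun l _ => hApos i l)).mp hsum
    exact this j (Finset.mem_univ j)
  ext j
  show ∑ i, b i * A i j = 0
  apply Finset.sum_eq_zero
  intro i _
  rcases eq_or_ne (b i) 0 with h | h
  · rw [h, zero_mul]
  · rw [hrow i j h, mul_zero]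
end

section
/- Let A be a strictly lower triangular s×s real matrix and b ∈ ℝ^s with A ≥ 0, b ≥ 0 entrywise, c = A e, and suppose b^T A^k (A c - ½ c²) = 0 for all k ≥ 0. If additionally b^T e = 1, then b^T c = 0, so the method cannot satisfy the second-order condition b^T c = ½; i.e., its classical order is at most 1. -/
open Matrix

/-- For an explicit RK method with `A ≥ 0`, `b ≥ 0`, `c = A e`, weak stage order ≥ 2,
and consistency `bᵀ e = 1`, one has `bᵀ c = 0`; in particular the second-order
condition `bᵀ c = ½` fails, so the classical order is at most 1. -/
theorem order_le_one_of_nonneg_wso2 (s : ℕ)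
    (A : Matrix (Fin s) (Fin s) ℝ) (b : Fin s → ℝ)
    (hA : ∀ i j : Fin s, i ≤ j → A i j = 0)
    (hApos : ∀ i j, 0 ≤ A i j) (hbpos : ∀ i, 0 ≤ b i)
    (c : Fin s → ℝ) (hc : c = A *ᵥ (1 : Fin s → ℝ))
    (hwso : ∀ k : ℕ, (b ᵥ* A ^ k) ⬝ᵥ (A *ᵥ c - (1 / 2 : ℝ) • (c ^ 2)) = 0)
    (hb1 : b ⬝ᵥ (1 : Fin s → ℝ) = 1) :
    b ⬝ᵥ c = 0 ∧ b ⬝ᵥ c ≠ 1 / 2 := by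
  have hcpos : ∀ j, 0 ≤ c j := by
    intro j
    rw [hc]
    simp only [mulVec, dotProduct, Pi.one_apply, mul_one]
    exact Finset.sum_nonneg fun l _ => hApos j l
  have hv : ∀ k i, 0 ≤ (b ᵥ* A ^ k) i := by
    intro k
    induction k with
    | zero => simpa using hbpos
    | succ k ih =>
      intro i
      rw [pow_succ, ← vecMul_vecMul]
      show 0 ≤ ∑ m, (b ᵥ* A ^ k) m * A m i
      exact Finset.sum_nonneg fun m _ => mul_nonneg (ih m) (hApos m i)
  -- nilpotency
  have hpow : ∀ k (i j : Fin s), (i : ℕ) < k + (j : ℕ) → (A ^ k) i j = 0 := by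
    intro k
    induction k with
    | zero =>
      intro i j hij
      simp only [pow_zero, one_apply]
      rw [if_neg]
      intro h; subst h; omega
    | succ k ih =>
      intro i j hij
      rw [pow_succ, mul_apply]
      apply Finset.sum_eq_zero
      intro m _
      by_cases hm : m ≤ j
      · rw [hA m j hm, mul_zero]
      · have : (j : ℕ) < (m : ℕ) := by
          exact Fin.lt_iff_val_lt_val.mp (lt_of_not_ge hm)
        rw [ih i m (by omega), zero_mul]
  have hAs : A ^ s = 0 := by
    ext i j
    exact hpow s i j (by omega)
  set x : ℕ → ℝ := fun k => (b ᵥ* A ^ k) ⬝ᵥ c with hxdef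
  have hstep : ∀ k, x (k + 1) = 0 → x k = 0 := by
    intro k h1
    have hk := hwso k
    set v := b ᵥ* A ^ k with hvdef
    have hdot : v ⬝ᵥ (A *ᵥ c) = (1 / 2 : ℝ) * (v ⬝ᵥ (c ^ 2)) := by
      have := hk
      rw [dotProduct_sub, dotProduct_smul, sub_eq_zero] at this
      simpa using this
    have hx1 : x (k + 1) = (1 / 2 : ℝ) * ∑ j, v j * (c j) ^ 2 := by
      have h2 : x (k + 1) = v ⬝ᵥ (A *ᵥ c) := by
        rw [hxdef]
        simp only [pow_succ, ← vecMul_vecMul, hvdef]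
        rw [← dotProduct_mulVec]
      rw [h2, hdot]
      congr 1
    rw [hx1] at h1
    have hsum : ∑ j, v j * (c j) ^ 2 = 0 := by linarith
    have hterm : ∀ j ∈ Finset.univ, v j * (c j) ^ 2 = 0 := by
      rw [← Finset.sum_eq_zero_iff_of_nonneg]
      · exact hsum
      · intro j _
        exact mul_nonneg (hv k j) (sq_nonneg _)
    show v ⬝ᵥ c = 0
    simp only [dotProduct]
    apply Finset.sum_eq_zero
    intro j hj
    have := hterm j hj
    by_cases hcj : c j = 0
    · rw [hcj, mul_zero]
    · have : v j * c j * c j = 0 := by rw [mul_assoc, ← pow_two]; exact this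
      exact (mul_eq_zero.mp this).resolve_right hcj
  have hxs : x s = 0 := by
    simp [hxdef, hAs]
  have hall : ∀ j, j ≤ s → x (s - j) = 0 := by
    intro j
    induction j with
    | zero => intro _; simpa using hxs
    | succ j ih =>
      intro hj
      have heq : s - j = (s - (j + 1)) + 1 := by omega
      apply hstep
      rw [← heq]
      exact ih (by omega)
  have hx0 : x 0 = 0 := by
    have := hall s le_rfl
    simpa using this
  have hbc : b ⬝ᵥ c = 0 := by
    have := hx0
    simpa [hxdef] using this
  exact ⟨hbc, by rw [hbc]; norm_num⟩
end

section
/- For a strictly lower triangular s×s matrix A and b ∈ ℝ^s, the degree of the stability polynomial R(z) = 1 + ∑_{j=1}^{s} z^j (b^T A^{j-1} e) is at most the dimension of the span Y of {b, A^T b, (A^T)² b, …, (A^T)^{s-1} b}. -/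
open Matrix

lemma strict_pow_entry {s : ℕ} (A : Matrix (Fin s) (Fin s) ℝ)
    (hA : ∀ i j : Fin s, i ≤ j → A i j = 0) :
    ∀ k : ℕ, ∀ i j : Fin s, (i : ℕ) < (j : ℕ) + k → (A ^ k) i j = 0 := by
  intro k
  induction k with
  | zero =>
    intro i j h
    rw [pow_zero, Matrix.one_apply, if_neg]
    intro he; subst he; omega
  | succ k ih =>
    intro i j h
    rw [pow_succ, Matrix.mul_apply]
    apply Finset.sum_eq_zero
    intro l _
    by_cases hl : (i : ℕ) < (l : ℕ) + k
    · rw [ih i l hl, zero_mul]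
    · rw [hA l j (by rw [Fin.le_def]; omega), mul_zero]

lemma strict_pow_zero {s : ℕ} (A : Matrix (Fin s) (Fin s) ℝ)
    (hA : ∀ i j : Fin s, i ≤ j → A i j = 0) : A ^ s = 0 := by
  ext i j
  rw [strict_pow_entry A hA s i j (by omega)]
  rfl

lemma mulVecLin_pow' {s : ℕ} (M : Matrix (Fin s) (Fin s) ℝ) (k : ℕ) :
    (M.mulVecLin) ^ k = (M ^ k).mulVecLin := by
  induction k with
  | zero => rw [pow_zero, pow_zero, Matrix.mulVecLin_one]; rfl
  | succ k ih => rw [pow_succ, pow_succ, ih, Matrix.mulVecLin_mul]; rfl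

/-- The degree of the stability polynomial `R(z) = 1 + ∑_{j=1}^s z^j (bᵀ A^{j-1} e)`
of an explicit RK method is at most the dimension of
`Y = span {b, Aᵀ b, …, (Aᵀ)^{s-1} b}`. -/
theorem stability_degree_le_dim_Y (s : ℕ)
    (A : Matrix (Fin s) (Fin s) ℝ) (b : Fin s → ℝ)
    (hA : ∀ i j : Fin s, i ≤ j → A i j = 0)
    (R : Polynomial ℝ)
    (hR : R = 1 + ∑ j ∈ Finset.Icc 1 s,
        Polynomial.monomial j (b ⬝ᵥ ((A ^ (j - 1)) *ᵥ (1 : Fin s → ℝ)))) :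
    R.natDegree ≤
      Module.finrank ℝ
        (Submodule.span ℝ (Set.range fun k : Fin s => (Aᵀ ^ (k : ℕ)) *ᵥ b)) := by
  rcases Nat.eq_zero_or_pos s with hs | hs
  · subst hs
    simp [hR]
  set Y : Submodule ℝ (Fin s → ℝ) :=
    Submodule.span ℝ (Set.range fun k : Fin s => (Aᵀ ^ (k : ℕ)) *ᵥ b) with hYdef
  set d : ℕ := Module.finrank ℝ Y with hd
  set f : Module.End ℝ (Fin s → ℝ) := (Aᵀ).mulVecLin with hf
  have hAs : Aᵀ ^ s = 0 := by
    rw [← Matrix.transpose_pow, strict_pow_zero A hA, Matrix.transpose_zero]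
  -- Y is f-invariant
  have hinv : ∀ x ∈ Y, f x ∈ Y := by
    intro x hx
    induction hx using Submodule.span_induction with
    | mem x hx =>
      obtain ⟨k, rfl⟩ := hx
      have : f ((Aᵀ ^ (k : ℕ)) *ᵥ b) = (Aᵀ ^ ((k : ℕ) + 1)) *ᵥ b := by
        show Aᵀ *ᵥ ((Aᵀ ^ (k : ℕ)) *ᵥ b) = _
        rw [Matrix.mulVec_mulVec, ← pow_succ']
      rw [this]
      by_cases hk : (k : ℕ) + 1 < s
      · exact Submodule.subset_span ⟨⟨(k : ℕ) + 1, hk⟩, rfl⟩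
      · have hks : s ≤ (k : ℕ) + 1 := not_lt.mp hk
        have : Aᵀ ^ ((k : ℕ) + 1) = 0 := by
          rw [← Nat.sub_add_cancel hks, pow_add, hAs, mul_zero]
        rw [this, Matrix.zero_mulVec]
        exact Submodule.zero_mem Y
    | zero => rw [map_zero]; exact Submodule.zero_mem Y
    | add x y _ _ hx hy => rw [map_add]; exact Submodule.add_mem Y hx hy
    | smul c x _ hx => rw [_root_.map_smul]; exact Submodule.smul_mem Y c hx
  -- restriction of f to Y is nilpotent
  set g : Module.End ℝ Y := f.restrict hinv with hg
  have hfs : f ^ s = 0 := by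
    rw [hf, mulVecLin_pow', hAs]
    ext v i
    simp
  have hgnil : IsNilpotent g := by
    refine ⟨s, ?_⟩
    rw [hg, Module.End.pow_restrict]
    refine LinearMap.ext fun x => Subtype.ext ?_
    rw [LinearMap.restrict_coe_apply, hfs]
    rfl
  -- g ^ d = 0
  have hgd : g ^ d = 0 := by
    have hcp := hgnil.charpoly_eq_X_pow_finrank
    have := g.aeval_self_charpoly
    rw [hcp] at this
    rwa [map_pow, Polynomial.aeval_X] at this
  -- b ∈ Y
  have hb : b ∈ Y := by
    have : b = (Aᵀ ^ ((⟨0, hs⟩ : Fin s) : ℕ)) *ᵥ b := by simp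
    rw [this]
    exact Submodule.subset_span ⟨⟨0, hs⟩, rfl⟩
  -- f ^ d b = 0
  have hfd : (Aᵀ ^ d) *ᵥ b = 0 := by
    have h1 : (g ^ d) ⟨b, hb⟩ = 0 := by rw [hgd]; rfl
    have h2 : ((g ^ d) ⟨b, hb⟩ : Fin s → ℝ) = (f ^ d) b := by
      rw [hg, Module.End.pow_restrict, LinearMap.restrict_apply]
    have h3 : (f ^ d) b = (Aᵀ ^ d) *ᵥ b := by rw [mulVecLin_pow']; rfl
    rw [← h3, ← h2, h1]; rfl
  have hvanish : ∀ n : ℕ, d ≤ n → (Aᵀ ^ n) *ᵥ b = 0 := by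
    intro n hn
    rw [← Nat.sub_add_cancel hn, pow_add, ← Matrix.mulVec_mulVec, hfd,
      Matrix.mulVec_zero]
  -- conclude
  rw [Polynomial.natDegree_le_iff_coeff_eq_zero]
  intro N hN
  have hN1 : 1 ≤ N := by omega
  rw [hR, Polynomial.coeff_add, Polynomial.coeff_one, if_neg (by omega),
    Polynomial.finset_sum_coeff]
  simp only [Polynomial.coeff_monomial]
  rw [Finset.sum_ite_eq' (Finset.Icc 1 s) N]
  split_ifs with hmem
  · have hcoef : b ⬝ᵥ ((A ^ (N - 1)) *ᵥ (1 : Fin s → ℝ)) = 0 := by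
      have : b ⬝ᵥ ((A ^ (N - 1)) *ᵥ (1 : Fin s → ℝ))
          = ((Aᵀ ^ (N - 1)) *ᵥ b) ⬝ᵥ (1 : Fin s → ℝ) := by
        rw [Matrix.dotProduct_mulVec, ← Matrix.transpose_pow,
          ← Matrix.mulVec_transpose]
      rw [this, hvanish (N - 1) (by omega), zero_dotProduct]
    simpa using hcoef
  · simp
end

section
/- Let x̄ ∈ ℝ^r have some zero entry and exactly m distinct entries with m ≥ 2. Then x̄ lies in the span of the entrywise powers x̄², x̄³, …, x̄^m. -/
/-!
Let `p` interpolate `a ↦ a⁻¹` on the nonzero entries of `x̄`; since there are `m - 1` of them,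
`deg p < m - 1`. Then `x_i = x_i² p(x_i)` holds for every entry, trivially at the zero entries,
and expanding `x² p(x)` in monomials writes `x̄` as a combination of `x̄², …, x̄^m`.
-/

open Polynomial Submodule

theorem mul_pow_eval_mem_span_pow {R ι : Type*} [CommRing R] (x : ι → R) (j n : ℕ)
    {p : R[X]} (hp : p.degree < n) :
    (fun i => x i ^ j * p.eval (x i)) ∈
      span R (Set.range fun k : Fin n => fun i => x i ^ ((k : ℕ) + j)) := by
  rcases eq_or_ne p 0 with rfl | hp0
  · simp only [eval_zero, mul_zero]
    exact zero_mem _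
  rw [mem_span_range_iff_exists_fun]
  refine ⟨fun k => p.coeff k, funext fun i => ?_⟩
  rw [eval_eq_sum_range' ((natDegree_lt_iff_degree_lt hp0).2 hp), Finset.mul_sum,
    ← Fin.sum_univ_eq_sum_range]
  simp only [Finset.sum_apply, Pi.smul_apply, smul_eq_mul, pow_add]
  exact Finset.sum_congr rfl fun k _ => by ring

theorem mem_span_pow_add_two {K ι : Type*} [Field K] [DecidableEq K] [Fintype ι]
    (x : ι → K) {n : ℕ} (hn : ((Finset.univ.image x).erase 0).card ≤ n) :
    x ∈ span K (Set.range fun k : Fin n => fun i => x i ^ ((k : ℕ) + 2)) := by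
  set s := (Finset.univ.image x).erase 0
  have hinj : Set.InjOn (id : K → K) s := Set.injOn_id _
  set p := Lagrange.interpolate s id (·⁻¹ : K → K)
  have hx : x = fun i => x i ^ 2 * p.eval (x i) := by
    funext i
    rcases eq_or_ne (x i) 0 with h | h
    · simp [h]
    · have hi : x i ∈ s :=
        Finset.mem_erase.2 ⟨h, Finset.mem_image_of_mem x (Finset.mem_univ i)⟩
      rw [show p.eval (x i) = (x i)⁻¹ from Lagrange.eval_interpolate_at_node _ hinj hi]
      field_simp
  have hdeg : p.degree < n :=
    (Lagrange.degree_interpolate_lt _ hinj).trans_le (by exact_mod_cast hn)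
  simpa only [← hx] using mul_pow_eval_mem_span_pow x 2 n hdeg

theorem vec_mem_span_of_powers_general (r m : ℕ)
    (xb : Fin r → ℝ) (hzero : ∃ i, xb i = 0)
    (hcard : (Finset.univ.image xb).card = m) :
    xb ∈ Submodule.span ℝ
      (Set.range fun k : Fin (m - 1) => fun i => xb i ^ ((k : ℕ) + 2)) := by
  obtain ⟨i₀, hi₀⟩ := hzero
  have h0 : (0 : ℝ) ∈ Finset.univ.image xb :=
    hi₀ ▸ Finset.mem_image_of_mem xb (Finset.mem_univ i₀)
  exact mem_span_pow_add_two xb (by rw [Finset.card_erase_of_mem h0, hcard])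

/-- If `x̄ ∈ ℝ^r` has a zero entry and exactly `m ≥ 2` distinct entries, then `x̄`
lies in the span of the entrywise powers `x̄², x̄³, …, x̄^m`. -/
theorem vec_mem_span_of_powers (r m : ℕ) (hm : 2 ≤ m)
    (xb : Fin r → ℝ) (hzero : ∃ i, xb i = 0)
    (hcard : (Finset.univ.image xb).card = m) :
    xb ∈ Submodule.span ℝ
      (Set.range fun k : Fin (m - 1) => fun i => xb i ^ ((k : ℕ) + 2)) :=
  vec_mem_span_of_powers_general r m xb hzero hcard
end

section
/- Let X ∈ ℝ^{r×r} be nilpotent with x̄ = X e having a zero entry and exactly m distinct entries. Then the smallest X-invariant subspace containing the stage residual vectors τ⁽ʲ⁾(X) = X x̄^{j−1} − (1/j) x̄^j for j = 1,…,m equals the smallest X-invariant subspace containing the vectors x̄, x̄², …, x̄^{m−1}. -/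
open Matrix

private lemma krylov_sum_mulVec {r : ℕ} {ι : Type*} (s : Finset ι)
    (A : ι → Matrix (Fin r) (Fin r) ℝ) (w : Fin r → ℝ) :
    (∑ i ∈ s, A i) *ᵥ w = ∑ i ∈ s, A i *ᵥ w := by
  classical
  induction s using Finset.cons_induction with
  | empty => simp
  | cons a s ha ih => simp [Finset.sum_insert ha, Matrix.add_mulVec, ih]

private lemma krylov_pow_mem {r : ℕ} (X : Matrix (Fin r) (Fin r) ℝ)
    (U : Submodule ℝ (Fin r → ℝ)) (hU : ∀ w ∈ U, X *ᵥ w ∈ U) :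
    ∀ (i : ℕ) (w : Fin r → ℝ), w ∈ U → (X ^ i) *ᵥ w ∈ U := by
  intro i
  induction i with
  | zero => intro w hw; simpa using hw
  | succ i ih =>
    intro w hw
    rw [pow_succ', ← Matrix.mulVec_mulVec]
    exact hU _ (ih w hw)

/-- For nilpotent `X` with `x̄ = X e` having a zero entry and exactly `m` distinct
entries, the smallest `X`-invariant subspace containing the residuals
`τ⁽ʲ⁾(X) = X x̄^{j-1} - (1/j) x̄^j`, `j = 1,…,m`, equals the smallest `X`-invariant
subspace containing `x̄, x̄², …, x̄^{m-1}`. -/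
theorem krylov_residuals_eq_krylov_powers (r m : ℕ)
    (X : Matrix (Fin r) (Fin r) ℝ) (hX : IsNilpotent X)
    (xb : Fin r → ℝ) (hxb : xb = X *ᵥ (1 : Fin r → ℝ))
    (hzero : ∃ i, xb i = 0)
    (hm : (Finset.univ.image xb).card = m)
    (τ : ℕ → (Fin r → ℝ))
    (hτ : ∀ j : ℕ, 1 ≤ j →
      τ j = X *ᵥ (fun i => xb i ^ (j - 1)) - ((1 : ℝ) / j) • fun i => xb i ^ j) :
    Submodule.span ℝ {w | ∃ (i : ℕ) (j : Fin m), w = (X ^ i) *ᵥ τ ((j : ℕ) + 1)}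
      = Submodule.span ℝ
          {w | ∃ (i : ℕ) (j : Fin (m - 1)),
            w = (X ^ i) *ᵥ fun t => xb t ^ ((j : ℕ) + 1)} := by
  classical
  have hτ1 : τ 1 = 0 := by
    rw [hτ 1 le_rfl, hxb]
    funext t
    simp [Matrix.mulVec, dotProduct]
  rcases m with _ | _ | M
  · -- m = 0
    have h1 : {w : Fin r → ℝ | ∃ (i : ℕ) (j : Fin 0), w = (X ^ i) *ᵥ τ ((j : ℕ) + 1)}
        = (∅ : Set (Fin r → ℝ)) := by
      ext w; simp
    have h2 : {w : Fin r → ℝ | ∃ (i : ℕ) (j : Fin 0),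
        w = (X ^ i) *ᵥ fun t => xb t ^ ((j : ℕ) + 1)} = (∅ : Set (Fin r → ℝ)) := by
      ext w; simp
    show Submodule.span ℝ {w : Fin r → ℝ | ∃ (i : ℕ) (j : Fin 0), w = (X ^ i) *ᵥ τ ((j : ℕ) + 1)}
        = Submodule.span ℝ {w : Fin r → ℝ | ∃ (i : ℕ) (j : Fin 0),
            w = (X ^ i) *ᵥ fun t => xb t ^ ((j : ℕ) + 1)}
    rw [h1, h2]
  · -- m = 1
    apply le_antisymm
    · rw [Submodule.span_le]
      rintro w ⟨i, j, rfl⟩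
      have hj : (j : ℕ) = 0 := by omega
      rw [hj, hτ1, Matrix.mulVec_zero]
      exact Submodule.zero_mem _
    · rw [Submodule.span_le]
      rintro w ⟨i, j, _⟩
      exact absurd j.isLt (by omega)
  · -- m = M + 2
    set v : ℕ → (Fin r → ℝ) := fun j t => xb t ^ j with hv
    set Sτ : Set (Fin r → ℝ) :=
      {w | ∃ (i : ℕ) (j : Fin (M + 2)), w = (X ^ i) *ᵥ τ ((j : ℕ) + 1)} with hSτ
    set Sv : Set (Fin r → ℝ) :=
      {w | ∃ (i : ℕ) (j : Fin (M + 2 - 1)),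
        w = (X ^ i) *ᵥ fun t => xb t ^ ((j : ℕ) + 1)} with hSv
    -- polynomial facts
    set A : Finset ℝ := Finset.univ.image xb with hA
    have h0A : (0 : ℝ) ∈ A := by
      obtain ⟨i, hi⟩ := hzero
      exact Finset.mem_image.2 ⟨i, Finset.mem_univ i, hi⟩
    set P : Polynomial ℝ := ∏ a ∈ A, (Polynomial.X - Polynomial.C a) with hP
    have hPmonic : P.Monic :=
      Polynomial.monic_prod_of_monic _ _ (fun a _ => Polynomial.monic_X_sub_C a)
    have hPdeg : P.natDegree = M + 2 := by
      rw [hP, Polynomial.natDegree_prod _ _ (fun a _ => Polynomial.X_sub_C_ne_zero a)]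
      simp [Polynomial.natDegree_X_sub_C, hm]
    have hPeval : ∀ i, P.eval (xb i) = 0 := by
      intro i
      rw [hP, Polynomial.eval_prod]
      exact Finset.prod_eq_zero (Finset.mem_image_of_mem xb (Finset.mem_univ i)) (by simp)
    have hP0 : P.coeff 0 = 0 := by
      rw [Polynomial.coeff_zero_eq_eval_zero, hP, Polynomial.eval_prod]
      exact Finset.prod_eq_zero h0A (by simp)
    have hP1 : P.coeff 1 ≠ 0 := by
      have hPXQ : P = Polynomial.X * ∏ a ∈ A.erase 0, (Polynomial.X - Polynomial.C a) := by
        rw [hP, ← Finset.mul_prod_erase A _ h0A, map_zero, sub_zero]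
      rw [hPXQ, show (1 : ℕ) = 0 + 1 from rfl, Polynomial.coeff_X_mul,
        Polynomial.coeff_zero_eq_eval_zero, Polynomial.eval_prod, Finset.prod_ne_zero_iff]
      intro a ha
      simp only [Polynomial.eval_sub, Polynomial.eval_X, Polynomial.eval_C, zero_sub,
        neg_ne_zero]
      exact Finset.ne_of_mem_erase ha
    set c : ℕ → ℝ := fun k => -P.coeff k with hc
    have hc0 : c 0 = 0 := by simp [hc, hP0]
    have hc1 : c 1 ≠ 0 := by simpa [hc] using hP1
    have hrel : ∀ i, xb i ^ (M + 2) = ∑ k ∈ Finset.range (M + 2), c k * xb i ^ k := by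
      intro i
      have h := hPeval i
      rw [Polynomial.eval_eq_sum_range, hPdeg, Finset.sum_range_succ] at h
      have hlead : P.coeff (M + 2) = 1 := by
        rw [← hPdeg]; exact hPmonic.coeff_natDegree
      rw [hlead, one_mul] at h
      have h2 : ∑ k ∈ Finset.range (M + 2), c k * xb i ^ k
          = -∑ k ∈ Finset.range (M + 2), P.coeff k * xb i ^ k := by
        rw [← Finset.sum_neg_distrib]
        exact Finset.sum_congr rfl (fun k _ => by rw [hc]; ring)
      rw [h2]
      linarith
    -- vector facts
    have hvm' : v (M + 1 + 1) = ∑ k ∈ Finset.range (M + 1), c (k + 1) • v (k + 1) := by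
      have h0 : v (M + 1 + 1) = ∑ k ∈ Finset.range (M + 1 + 1), c k • v k := by
        funext t
        have h := hrel t
        simp only [hv, Finset.sum_apply, Pi.smul_apply, smul_eq_mul]
        exact h
      rw [h0, Finset.sum_range_succ' (fun k => c k • v k) (M + 1), hc0, zero_smul, add_zero]
    have hrec : ∀ j : ℕ, v (j + 1) = ((j : ℝ) + 1) • (X *ᵥ v j - τ (j + 1)) := by
      intro j
      have h := hτ (j + 1) (by omega)
      simp only [Nat.add_sub_cancel] at h
      have hj : ((j : ℝ) + 1) ≠ 0 := by positivity
      have h' : τ (j + 1) = X *ᵥ v j - ((1 : ℝ) / ((j : ℝ) + 1)) • v (j + 1) := by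
        rw [h]
        push_cast
        rfl
      rw [h', sub_sub_cancel, smul_smul, mul_one_div, div_self hj, one_smul]
    -- invariance
    have hTinv : ∀ w ∈ Submodule.span ℝ Sv, X *ᵥ w ∈ Submodule.span ℝ Sv := by
      intro w hw
      induction hw using Submodule.span_induction with
      | mem x hx =>
        obtain ⟨i, j, rfl⟩ := hx
        rw [Matrix.mulVec_mulVec, ← pow_succ']
        exact Submodule.subset_span ⟨i + 1, j, rfl⟩
      | zero => simp
      | add x y hx hy ihx ihy => rw [Matrix.mulVec_add]; exact add_mem ihx ihy
      | smul a x hx ih => rw [Matrix.mulVec_smul]; exact Submodule.smul_mem _ a ih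
    have hSinv : ∀ w ∈ Submodule.span ℝ Sτ, X *ᵥ w ∈ Submodule.span ℝ Sτ := by
      intro w hw
      induction hw using Submodule.span_induction with
      | mem x hx =>
        obtain ⟨i, j, rfl⟩ := hx
        rw [Matrix.mulVec_mulVec, ← pow_succ']
        exact Submodule.subset_span ⟨i + 1, j, rfl⟩
      | zero => simp
      | add x y hx hy ihx ihy => rw [Matrix.mulVec_add]; exact add_mem ihx ihy
      | smul a x hx ih => rw [Matrix.mulVec_smul]; exact Submodule.smul_mem _ a ih
    -- generators of T
    have hvT : ∀ k : ℕ, 1 ≤ k → k ≤ M + 1 → v k ∈ Submodule.span ℝ Sv := by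
      intro k h1 h2
      apply Submodule.subset_span
      refine ⟨0, ⟨k - 1, by omega⟩, ?_⟩
      rw [pow_zero, Matrix.one_mulVec]
      show v k = fun t => xb t ^ (k - 1 + 1)
      rw [show k - 1 + 1 = k from by omega]
    have hvmT : v (M + 1 + 1) ∈ Submodule.span ℝ Sv := by
      rw [hvm']
      exact Submodule.sum_mem _ fun k hk =>
        Submodule.smul_mem _ _ (hvT (k + 1) (by omega) (by
          have := Finset.mem_range.1 hk; omega))
    have hτT : ∀ j : ℕ, j ≤ M + 1 → τ (j + 1) ∈ Submodule.span ℝ Sv := by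
      intro j hj
      rcases Nat.eq_zero_or_pos j with h0 | h1
      · rw [h0, hτ1]; exact Submodule.zero_mem _
      · have h := hτ (j + 1) (by omega)
        simp only [Nat.add_sub_cancel] at h
        rw [h]
        apply sub_mem
        · exact hTinv _ (hvT j h1 (by omega))
        · apply Submodule.smul_mem
          rcases Nat.lt_or_ge j (M + 1) with h2 | h2
          · exact hvT (j + 1) (by omega) (by omega)
          · have hj' : j = M + 1 := by omega
            rw [hj']
            exact hvmT
    have hST : Submodule.span ℝ Sτ ≤ Submodule.span ℝ Sv := by
      rw [Submodule.span_le]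
      rintro w ⟨i, j, rfl⟩
      exact krylov_pow_mem X _ hTinv i _ (hτT j (by have := j.isLt; omega))
    -- generators of S
    have hτS : ∀ j : ℕ, j ≤ M + 1 → τ (j + 1) ∈ Submodule.span ℝ Sτ := by
      intro j hj
      apply Submodule.subset_span
      exact ⟨0, ⟨j, by omega⟩, by rw [pow_zero, Matrix.one_mulVec]⟩
    have hkey : ∀ j : ℕ, j ≤ M + 1 →
        v (j + 1) - (((j + 1).factorial : ℝ)) • ((X ^ j) *ᵥ v 1)
          ∈ Submodule.span ℝ Sτ := by
      intro j
      induction j with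
      | zero =>
        intro _
        have h0 : v (0 + 1) - (((0 + 1).factorial : ℝ)) • ((X ^ 0) *ᵥ v 1) = 0 := by
          simp [Nat.factorial]
        rw [h0]
        exact Submodule.zero_mem _
      | succ j ih =>
        intro hj1
        have ihj := ih (by omega)
        have hmem : ((j : ℝ) + 1 + 1) •
            (X *ᵥ (v (j + 1) - (((j + 1).factorial : ℝ)) • ((X ^ j) *ᵥ v 1)) - τ (j + 1 + 1))
              ∈ Submodule.span ℝ Sτ :=
          Submodule.smul_mem _ _ (sub_mem (hSinv _ ihj) (hτS (j + 1) hj1))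
        have e2 : v (j + 1 + 1) - (((j + 1 + 1).factorial : ℝ)) • ((X ^ (j + 1)) *ᵥ v 1)
            = ((j : ℝ) + 1 + 1) •
              (X *ᵥ (v (j + 1) - (((j + 1).factorial : ℝ)) • ((X ^ j) *ᵥ v 1))
                - τ (j + 1 + 1)) := by
          rw [hrec (j + 1)]
          rw [Matrix.mulVec_sub, Matrix.mulVec_smul, Matrix.mulVec_mulVec, ← pow_succ']
          rw [show (((j + 1 + 1).factorial : ℝ))
              = ((j : ℝ) + 1 + 1) * (((j + 1).factorial : ℝ)) by
            rw [Nat.factorial_succ]; push_cast; ring]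
          push_cast
          module
        rw [e2]
        exact hmem
    -- the combination Y *ᵥ v 1 ∈ S
    set e : ℕ → ℝ := fun k => c (k + 1) * ((k + 1).factorial : ℝ) with he
    set Y : Matrix (Fin r) (Fin r) ℝ :=
      (∑ k ∈ Finset.range (M + 1), e k • X ^ k)
        - (((M + 1 + 1).factorial : ℝ)) • X ^ (M + 1) with hY
    have hYv1 : Y *ᵥ v 1 ∈ Submodule.span ℝ Sτ := by
      have h1 := hkey (M + 1) le_rfl
      have h2 : ∑ k ∈ Finset.range (M + 1),
          c (k + 1) • (v (k + 1) - (((k + 1).factorial : ℝ)) • ((X ^ k) *ᵥ v 1))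
            ∈ Submodule.span ℝ Sτ :=
        Submodule.sum_mem _ fun k hk =>
          Submodule.smul_mem _ _ (hkey k (by have := Finset.mem_range.1 hk; omega))
      have h3 := sub_mem h1 h2
      have e3 : Y *ᵥ v 1
          = (v (M + 1 + 1) - (((M + 1 + 1).factorial : ℝ)) • ((X ^ (M + 1)) *ᵥ v 1))
            - ∑ k ∈ Finset.range (M + 1),
                c (k + 1) • (v (k + 1) - (((k + 1).factorial : ℝ)) • ((X ^ k) *ᵥ v 1)) := by
        rw [hY, Matrix.sub_mulVec, krylov_sum_mulVec]
        simp only [Matrix.smul_mulVec]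
        rw [hvm']
        simp only [smul_sub, Finset.sum_sub_distrib, smul_smul, he]
        abel
      rw [e3]
      exact h3
    -- decompose Y = c 1 • 1 + X * B
    set B : Matrix (Fin r) (Fin r) ℝ :=
      (∑ k ∈ Finset.range M, e (k + 1) • X ^ k)
        - (((M + 1 + 1).factorial : ℝ)) • X ^ M with hB
    have hYdecomp : Y = c 1 • (1 : Matrix (Fin r) (Fin r) ℝ) + X * B := by
      rw [hY, hB]
      rw [Finset.sum_range_succ' (fun k => e k • X ^ k) M]
      have he0 : e 0 • X ^ 0 = c 1 • (1 : Matrix (Fin r) (Fin r) ℝ) := by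
        simp [he, Nat.factorial]
      rw [he0, mul_sub, Finset.mul_sum]
      simp only [mul_smul_comm, ← pow_succ']
      abel
    have hXB : Commute X B := by
      apply Commute.sub_right
      · exact Commute.sum_right _ _ _ fun k _ => ((Commute.refl X).pow_right k).smul_right _
      · exact ((Commute.refl X).pow_right M).smul_right _
    have hNnil : IsNilpotent (X * B) := by
      obtain ⟨K, hK⟩ := hX
      exact ⟨K, by rw [hXB.mul_pow, hK, zero_mul]⟩
    have hBS : ∀ w ∈ Submodule.span ℝ Sτ, B *ᵥ w ∈ Submodule.span ℝ Sτ := by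
      intro w hw
      rw [hB, Matrix.sub_mulVec, krylov_sum_mulVec]
      apply sub_mem
      · exact Submodule.sum_mem _ fun k _ => by
          rw [Matrix.smul_mulVec]
          exact Submodule.smul_mem _ _ (krylov_pow_mem X _ hSinv k w hw)
      · rw [Matrix.smul_mulVec]
        exact Submodule.smul_mem _ _ (krylov_pow_mem X _ hSinv M w hw)
    have hNS : ∀ w ∈ Submodule.span ℝ Sτ, (X * B) *ᵥ w ∈ Submodule.span ℝ Sτ := by
      intro w hw
      rw [← Matrix.mulVec_mulVec]
      exact hSinv _ (hBS w hw)
    obtain ⟨K, hK⟩ := hNnil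
    have hdown : ∀ jj k : ℕ, K ≤ k + jj → ((X * B) ^ k) *ᵥ v 1 ∈ Submodule.span ℝ Sτ := by
      intro jj
      induction jj with
      | zero =>
        intro k hk
        rw [pow_eq_zero_of_le (by omega : K ≤ k) hK, Matrix.zero_mulVec]
        exact Submodule.zero_mem _
      | succ jj ih =>
        intro k hk
        have h1 : ((X * B) ^ k) *ᵥ (Y *ᵥ v 1) ∈ Submodule.span ℝ Sτ :=
          krylov_pow_mem (X * B) _ hNS k _ hYv1
        have h2 : ((X * B) ^ (k + 1)) *ᵥ v 1 ∈ Submodule.span ℝ Sτ := ih (k + 1) (by omega)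
        have e4 : ((X * B) ^ k) *ᵥ v 1
            = (c 1)⁻¹ • (((X * B) ^ k) *ᵥ (Y *ᵥ v 1) - ((X * B) ^ (k + 1)) *ᵥ v 1) := by
          rw [hYdecomp, Matrix.add_mulVec, Matrix.smul_mulVec, Matrix.one_mulVec,
            Matrix.mulVec_add, Matrix.mulVec_smul, Matrix.mulVec_mulVec,
            ← pow_succ, add_sub_cancel_right, smul_smul,
            inv_mul_cancel₀ hc1, one_smul]
        rw [e4]
        exact Submodule.smul_mem _ _ (sub_mem h1 h2)
    have hv1S : v 1 ∈ Submodule.span ℝ Sτ := by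
      have h0 := hdown K 0 (by omega)
      simpa using h0
    have hvS : ∀ k : ℕ, k ≤ M + 1 → v (k + 1) ∈ Submodule.span ℝ Sτ := by
      intro k hk
      have h1 := hkey k hk
      have h2 : (((k + 1).factorial : ℝ)) • ((X ^ k) *ᵥ v 1) ∈ Submodule.span ℝ Sτ :=
        Submodule.smul_mem _ _ (krylov_pow_mem X _ hSinv k _ hv1S)
      have h3 := add_mem h1 h2
      rwa [sub_add_cancel] at h3
    have hTS : Submodule.span ℝ Sv ≤ Submodule.span ℝ Sτ := by
      rw [Submodule.span_le]
      rintro w ⟨i, j, rfl⟩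
      exact krylov_pow_mem X _ hSinv i _ (hvS j (by have := j.isLt; omega))
    exact le_antisymm hST hTS
end

section
/- Let X ∈ ℝ^{r×r} be nilpotent with x̄ = X e having a zero entry and exactly m distinct entries. Then the smallest X-invariant subspace containing the vectors τ⁽ʲ⁾(X) = X x̄^{j−1} − (1/j) x̄^j for j = 1,…,m has dimension at least m − 1. -/
open Matrix

/-- For nilpotent `X` with `x̄ = X e` having a zero entry and exactly `m` distinct
entries, the smallest `X`-invariant subspace containing the residuals
`τ⁽ʲ⁾(X) = X x̄^{j-1} - (1/j) x̄^j`, `j = 1,…,m`, has dimension at least `m - 1`. -/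
theorem krylov_residuals_dim_ge (r m : ℕ)
    (X : Matrix (Fin r) (Fin r) ℝ) (hX : IsNilpotent X)
    (xb : Fin r → ℝ) (hxb : xb = X *ᵥ (1 : Fin r → ℝ))
    (hzero : ∃ i, xb i = 0)
    (hm : (Finset.univ.image xb).card = m)
    (τ : ℕ → (Fin r → ℝ))
    (hτ : ∀ j : ℕ, 1 ≤ j →
      τ j = X *ᵥ (fun i => xb i ^ (j - 1)) - ((1 : ℝ) / j) • fun i => xb i ^ j) :
    m - 1 ≤ Module.finrank ℝ
      (Submodule.span ℝ
        {w | ∃ (i : ℕ) (j : Fin m), w = (X ^ i) *ᵥ τ ((j : ℕ) + 1)}) := by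
  classical
  rcases Nat.lt_or_ge m 2 with hm2 | hm2
  · have h0 : m - 1 = 0 := by omega
    rw [h0]; exact Nat.zero_le _
  set S : Submodule ℝ (Fin r → ℝ) :=
    Submodule.span ℝ {w | ∃ (i : ℕ) (j : Fin m), w = (X ^ i) *ᵥ τ ((j : ℕ) + 1)} with hSdef
  set L : (Fin r → ℝ) →ₗ[ℝ] (Fin r → ℝ) := Matrix.mulVecLin X with hLdef
  -- S is invariant under L
  have hSL : ∀ v ∈ S, L v ∈ S := by
    intro v hv
    induction hv using Submodule.span_induction with
    | mem x hx =>
      obtain ⟨i, j, rfl⟩ := hx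
      refine Submodule.subset_span ⟨i + 1, j, ?_⟩
      show Matrix.mulVecLin X ((X ^ i) *ᵥ τ ((j : ℕ) + 1)) = (X ^ (i+1)) *ᵥ τ ((j : ℕ) + 1)
      rw [Matrix.mulVecLin_apply, Matrix.mulVec_mulVec, ← pow_succ']
    | zero => simp
    | add x y _ _ hx hy => simpa using Submodule.add_mem _ hx hy
    | smul a x _ hx => simpa using Submodule.smul_mem _ a hx
  have hτS : ∀ k : ℕ, 1 ≤ k → k ≤ m → τ k ∈ S := by
    intro k hk1 hkm
    refine Submodule.subset_span ⟨0, ⟨k - 1, by omega⟩, ?_⟩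
    simp [Nat.sub_add_cancel hk1, Matrix.one_mulVec]
  -- the powers of xb
  set pk : ℕ → (Fin r → ℝ) := fun k => fun i => xb i ^ k with hpkdef
  -- the induced map on the quotient
  have hle : S ≤ S.comap L := fun v hv => hSL v hv
  set N : ((Fin r → ℝ) ⧸ S) →ₗ[ℝ] ((Fin r → ℝ) ⧸ S) := Submodule.mapQ S S L hle with hNdef
  set q : ℕ → ((Fin r → ℝ) ⧸ S) := fun k => S.mkQ (pk k) with hqdef
  have hNmk : ∀ v : Fin r → ℝ, N (S.mkQ v) = S.mkQ (X *ᵥ v) := by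
    intro v
    rw [hNdef, Submodule.mkQ_apply, Submodule.mapQ_apply]
    rfl
  -- key recurrence in the quotient
  have hqrel : ∀ k : ℕ, 1 ≤ k → k ≤ m → q k = (k : ℝ) • N (q (k - 1)) := by
    intro k hk1 hkm
    have h1 : X *ᵥ pk (k - 1) = τ k + ((1 : ℝ) / k) • pk k := by
      rw [hτ k hk1]; abel
    have h2 : N (q (k - 1)) = S.mkQ (τ k) + ((1 : ℝ) / k) • q k := by
      rw [hqdef, hNmk, h1, map_add, _root_.map_smul]
    have h3 : S.mkQ (τ k) = 0 := by
      rw [Submodule.mkQ_apply, Submodule.Quotient.mk_eq_zero]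
      exact hτS k hk1 hkm
    rw [h2, h3, zero_add, smul_smul]
    have hk0 : (k : ℝ) ≠ 0 := by positivity
    rw [mul_one_div, div_self hk0, one_smul]
  -- polynomial with roots the values of xb
  set img : Finset ℝ := Finset.univ.image xb with himgdef
  obtain ⟨i0, hi0⟩ := hzero
  have h0img : (0 : ℝ) ∈ img := Finset.mem_image.2 ⟨i0, Finset.mem_univ _, hi0⟩
  set P : Polynomial ℝ := ∏ c ∈ img, (Polynomial.X - Polynomial.C c) with hPdef
  have hPm : P.Monic :=
    Polynomial.monic_prod_of_monic _ _ fun c _ => Polynomial.monic_X_sub_C c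
  have hPdeg : P.natDegree = m := by
    rw [hPdef, Polynomial.natDegree_prod_of_monic _ _
      fun c _ => Polynomial.monic_X_sub_C c]
    simp [Polynomial.natDegree_X_sub_C, hm]
  have hPeval : ∀ c ∈ img, P.eval c = 0 := by
    intro c hc
    rw [hPdef, Polynomial.eval_prod]
    exact Finset.prod_eq_zero hc (by simp)
  set a : ℕ → ℝ := fun k => -P.coeff k with hadef
  have ha0 : a 0 = 0 := by
    have h : P.coeff 0 = 0 := by
      rw [Polynomial.coeff_zero_eq_eval_zero]
      exact hPeval 0 h0img
    simp [hadef, h]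
  have ha1 : a 1 ≠ 0 := by
    have hQ : P = Polynomial.X * ∏ c ∈ img.erase 0, (Polynomial.X - Polynomial.C c) := by
      rw [hPdef, ← Finset.mul_prod_erase _ _ h0img]
      simp
    have hc1 : P.coeff 1 = (∏ c ∈ img.erase 0, (Polynomial.X - Polynomial.C c)).coeff 0 := by
      rw [hQ]
      exact Polynomial.coeff_X_mul _ 0
    rw [hadef]
    simp only [neg_ne_zero]
    rw [hc1, Polynomial.coeff_zero_eq_eval_zero, Polynomial.eval_prod]
    rw [Finset.prod_ne_zero_iff]
    intro c hc
    have hcne : c ≠ 0 := Finset.ne_of_mem_erase hc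
    simp [hcne]
  -- the reduction identity for powers
  have hroot : ∀ c ∈ img, c ^ m = ∑ k ∈ Finset.range m, a k * c ^ k := by
    intro c hc
    have hcm : P.coeff m = 1 := by
      have := hPm.coeff_natDegree
      rwa [hPdeg] at this
    have h1 : (0 : ℝ) = (∑ k ∈ Finset.range m, P.coeff k * c ^ k) + c ^ m := by
      rw [← hPeval c hc, Polynomial.eval_eq_sum_range, hPdeg, Finset.sum_range_succ, hcm,
        one_mul]
    have h2 : c ^ m = ∑ k ∈ Finset.range m, -(P.coeff k * c ^ k) := by
      rw [Finset.sum_neg_distrib]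
      linarith
    rw [h2]
    exact Finset.sum_congr rfl fun k _ => by rw [hadef]; ring
  have hqm : q m = ∑ k ∈ Finset.range m, a k • q k := by
    have hpkm : pk m = ∑ k ∈ Finset.range m, a k • pk k := by
      funext i
      have h := hroot (xb i) (Finset.mem_image.2 ⟨i, Finset.mem_univ _, rfl⟩)
      simpa [hpkdef, Finset.sum_apply] using h
    rw [hqdef]
    simp only [hpkm, map_sum, _root_.map_smul]
  -- the span of the images of the powers in the quotient
  set U : Submodule ℝ ((Fin r → ℝ) ⧸ S) :=
    Submodule.span ℝ {y | ∃ k : ℕ, 1 ≤ k ∧ k ≤ m - 1 ∧ y = q k} with hUdef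
  have hgen : ∀ k : ℕ, 1 ≤ k → k ≤ m - 1 → q k ∈ U := fun k h1 h2 =>
    Submodule.subset_span ⟨k, h1, h2, rfl⟩
  have hmap : ∀ k : ℕ, 2 ≤ k → k ≤ m → q k ∈ Submodule.map N U := by
    intro k h2 hkm
    rw [hqrel k (by omega) hkm]
    exact Submodule.smul_mem _ _
      (Submodule.mem_map_of_mem (hgen (k - 1) (by omega) (by omega)))
  have hUN : U ≤ Submodule.map N U := by
    rw [hUdef, Submodule.span_le]
    rintro y ⟨k, hk1, hkm, rfl⟩
    rcases Nat.lt_or_ge k 2 with hk | hk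
    · have hk1' : k = 1 := by omega
      subst hk1'
      have hqmm : q m ∈ Submodule.map N U := hmap m hm2 le_rfl
      have hsum : ∑ k ∈ Finset.Ico 2 m, a k • q k ∈ Submodule.map N U :=
        Submodule.sum_mem _ fun k hk =>
          Submodule.smul_mem _ _
            (hmap k (Finset.mem_Ico.1 hk).1 (le_of_lt (Finset.mem_Ico.1 hk).2))
      have hsplit : Finset.range m = insert 0 (insert 1 (Finset.Ico 2 m)) := by
        ext x
        simp only [Finset.mem_range, Finset.mem_insert, Finset.mem_Ico]
        omega
      have key : a 1 • q 1 = q m - ∑ k ∈ Finset.Ico 2 m, a k • q k := by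
        rw [hqm, hsplit, Finset.sum_insert (by simp), Finset.sum_insert (by simp),
          ha0, zero_smul, zero_add]
        abel
      have hmem : a 1 • q 1 ∈ Submodule.map N U := by
        rw [key]; exact Submodule.sub_mem _ hqmm hsum
      have hmem2 := Submodule.smul_mem _ (a 1)⁻¹ hmem
      rwa [smul_smul, inv_mul_cancel₀ ha1, one_smul] at hmem2
    · exact hmap k hk (by omega)
  have hUt : ∀ t : ℕ, U ≤ Submodule.map (N ^ t) U := by
    intro t
    induction t with
    | zero =>
      rw [pow_zero]
      exact fun x hx => ⟨x, hx, rfl⟩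
    | succ t ih =>
      calc U ≤ Submodule.map N U := hUN
      _ ≤ Submodule.map N (Submodule.map (N ^ t) U) := Submodule.map_mono ih
      _ = Submodule.map (N ^ (t + 1)) U := by
        rw [← Submodule.map_comp]
        congr 1
        rw [pow_succ']
        rfl
  obtain ⟨n, hn⟩ := hX
  have hNt : ∀ (t : ℕ) (v : Fin r → ℝ), (N ^ t) (S.mkQ v) = S.mkQ ((X ^ t) *ᵥ v) := by
    intro t
    induction t with
    | zero => intro v; simp [Matrix.one_mulVec]
    | succ t ih =>
      intro v
      have : (N ^ (t + 1)) (S.mkQ v) = (N ^ t) (N (S.mkQ v)) := by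
        rw [pow_succ]; rfl
      rw [this, hNmk, ih, Matrix.mulVec_mulVec, ← pow_succ]
  have hq0 : ∀ k : ℕ, 1 ≤ k → k ≤ m - 1 → pk k ∈ S := by
    intro k h1 h2
    have hk : q k ∈ Submodule.map (N ^ n) U := hUt n (hgen k h1 h2)
    obtain ⟨z, _, hz2⟩ := hk
    obtain ⟨v, rfl⟩ := S.mkQ_surjective z
    rw [hNt n v, hn, Matrix.zero_mulVec, map_zero] at hz2
    have : S.mkQ (pk k) = 0 := hz2.symm
    rwa [Submodule.mkQ_apply, Submodule.Quotient.mk_eq_zero] at this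
  -- linear independence of the powers
  have hindep : LinearIndependent ℝ (fun j : Fin (m - 1) => pk ((j : ℕ) + 1)) := by
    rw [Fintype.linearIndependent_iff]
    intro g hg
    set G : Polynomial ℝ :=
      ∑ j : Fin (m - 1), Polynomial.C (g j) * Polynomial.X ^ ((j : ℕ) + 1) with hGdef
    have hGdeg : G.natDegree < m := by
      have h := Polynomial.natDegree_sum_le_of_forall_le Finset.univ
        (fun j : Fin (m - 1) => Polynomial.C (g j) * Polynomial.X ^ ((j : ℕ) + 1))
        (n := m - 1) ?_
      · rw [← hGdef] at h
        omega
      · intro j _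
        refine le_trans (Polynomial.natDegree_C_mul_le _ _) ?_
        rw [Polynomial.natDegree_X_pow]
        have := j.isLt
        omega
    have hGeval : ∀ c ∈ img, G.eval c = 0 := by
      intro c hc
      obtain ⟨i, _, rfl⟩ := Finset.mem_image.1 hc
      have h := congrFun hg i
      simpa [hGdef, Polynomial.eval_finset_sum, hpkdef, Finset.sum_apply] using h
    have hG0 : G = 0 :=
      Polynomial.eq_zero_of_natDegree_lt_card_of_eval_eq_zero' G img hGeval
        (by rw [hm]; exact hGdeg)
    intro j
    have hcoeff : G.coeff ((j : ℕ) + 1) = g j := by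
      rw [hGdef, Polynomial.finset_sum_coeff]
      rw [Finset.sum_eq_single j]
      · simp [Polynomial.coeff_C_mul, Polynomial.coeff_X_pow]
      · intro b _ hb
        have hne : (b : ℕ) + 1 ≠ (j : ℕ) + 1 := by
          intro h
          exact hb (Fin.ext (by omega))
        simp only [Polynomial.coeff_C_mul, Polynomial.coeff_X_pow]
        rw [if_neg (fun h => hne h.symm), mul_zero]
      · simp
    rw [← hcoeff, hG0, Polynomial.coeff_zero]
  -- conclude
  have hsub : Submodule.span ℝ (Set.range fun j : Fin (m - 1) => pk ((j : ℕ) + 1)) ≤ S := by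
    rw [Submodule.span_le]
    rintro y ⟨j, rfl⟩
    exact hq0 ((j : ℕ) + 1) (by omega) (by have := j.isLt; omega)
  have hrank :
      Module.finrank ℝ
        (Submodule.span ℝ (Set.range fun j : Fin (m - 1) => pk ((j : ℕ) + 1))) = m - 1 := by
    rw [finrank_span_eq_card hindep, Fintype.card_fin]
  calc m - 1
      = Module.finrank ℝ
        (Submodule.span ℝ (Set.range fun j : Fin (m - 1) => pk ((j : ℕ) + 1))) := hrank.symm
    _ ≤ Module.finrank ℝ S := Submodule.finrank_mono hsub
end

section
/- Let a Runge–Kutta method (A,b) with c = A e have s stages, and suppose two abscissae cᵢ = cⱼ with i ≠ j. If the column space of the Vandermonde-like matrix V = [c | c² | ⋯ | c^{n_c−1}] (entrywise powers, n_c the number of distinct abscissae) is A-invariant, then there exists a nontrivial partition of {1,…,s} with partition matrix S ∈ ℝ^{s×r} (r < s) and a matrix B ∈ ℝ^{r×r} with A S = S B; i.e., the method is S-reducible. -/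
open Matrix

/-- If a confluent RK method (`c i0 = c j0` for some `i0 ≠ j0`) has the column space
of the Vandermonde-like matrix `V = [c | c² | ⋯ | c^{n_c-1}]` `A`-invariant, then the
method is S-reducible: there is a nontrivial partition of `{1,…,s}` (encoded by a
surjection `P : Fin s → Fin r`, `r < s`) whose partition matrix `S` satisfies
`A S = S B` for some matrix `B`. -/
theorem S_reducible_of_vandermonde_invariant (s : ℕ)
    (A : Matrix (Fin s) (Fin s) ℝ)
    (c : Fin s → ℝ) (hc : c = A *ᵥ (1 : Fin s → ℝ))
    (i0 j0 : Fin s) (hij : i0 ≠ j0) (hcc : c i0 = c j0)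
    (nc : ℕ) (hnc : (Finset.univ.image c).card = nc)
    (hinv : ∀ k : Fin (nc - 1),
      A *ᵥ (fun i => c i ^ ((k : ℕ) + 1)) ∈
        Submodule.span ℝ
          (Set.range fun k : Fin (nc - 1) => fun i => c i ^ ((k : ℕ) + 1))) :
    ∃ (r : ℕ) (_ : r < s) (P : Fin s → Fin r), Function.Surjective P ∧
      ∃ B : Matrix (Fin r) (Fin r) ℝ,
        A * (Matrix.of fun i j => if P i = j then (1 : ℝ) else 0)
          = (Matrix.of fun i j => if P i = j then (1 : ℝ) else 0) * B := by
  classical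
  set t : Finset ℝ := Finset.univ.image c with ht
  have hmem : ∀ i, c i ∈ t := fun i => Finset.mem_image_of_mem c (Finset.mem_univ i)
  -- r = nc < s
  have hncs : nc < s := by
    rw [← hnc]
    have hle : t.card ≤ s := by
      simpa using Finset.card_image_le (s := (Finset.univ : Finset (Fin s))) (f := c)
    rcases lt_or_eq_of_le hle with h | h
    · exact h
    · exfalso
      have hinj : Set.InjOn c (Finset.univ : Finset (Fin s)) := by
        rw [← Finset.card_image_iff]
        simpa using h
      exact hij (hinj (by simp) (by simp) hcc)
  have hnc1 : 1 ≤ nc := by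
    rw [← hnc]
    exact Finset.card_pos.mpr ⟨c i0, hmem i0⟩
  -- the partition map
  set P : Fin s → Fin nc := fun i => finCongr hnc (t.equivFin ⟨c i, hmem i⟩) with hP
  have hPiff : ∀ i j, P i = P j ↔ c i = c j := by
    intro i j
    constructor
    · intro h
      have := (finCongr hnc).injective h
      have := t.equivFin.injective this
      exact congrArg Subtype.val this
    · intro h
      simp only [hP]
      exact congrArg (fun x : t => finCongr hnc (t.equivFin x)) (Subtype.ext h)
  have hPsurj : Function.Surjective P := by
    intro k
    set w := t.equivFin.symm ((finCongr hnc).symm k) with hw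
    obtain ⟨i, _, hiv⟩ := Finset.mem_image.mp w.2
    refine ⟨i, ?_⟩
    have h1 : (⟨c i, hmem i⟩ : t) = w := Subtype.ext hiv
    simp [hP, h1, hw]
  -- the submodule of functions factoring through c
  set W : Submodule ℝ (Fin s → ℝ) :=
    { carrier := {f | ∀ i j, c i = c j → f i = f j}
      add_mem' := fun hf hg i j h => by
        simp only [Pi.add_apply, hf i j h, hg i j h]
      zero_mem' := fun i j h => rfl
      smul_mem' := fun a f hf i j h => by
        simp only [Pi.smul_apply, hf i j h] } with hWdef
  have hWmem : ∀ f : Fin s → ℝ, (∀ i j, c i = c j → f i = f j) → f ∈ W := fun f hf => hf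
  have hpowW : ∀ m : ℕ, (fun i => c i ^ m) ∈ W := by
    intro m
    exact hWmem _ fun i j h => by rw [h]
  -- A maps powers of c (exponent < nc) into W
  have hApow : ∀ m : ℕ, m < nc → A *ᵥ (fun i => c i ^ m) ∈ W := by
    intro m hm
    match m with
    | 0 =>
      have h1 : (fun i => c i ^ 0) = (1 : Fin s → ℝ) := by
        funext i; simp
      rw [h1, ← hc]
      exact hWmem c fun i j h => h
    | Nat.succ k =>
      have hk : k < nc - 1 := by omega
      have hsp : Submodule.span ℝ
          (Set.range fun k : Fin (nc - 1) => fun i => c i ^ ((k : ℕ) + 1)) ≤ W := by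
        rw [Submodule.span_le]
        rintro f ⟨k', rfl⟩
        exact hpowW _
      exact hsp (hinv ⟨k, hk⟩)
  -- each column of S, as a function of stage index, is mapped by A into W
  have hg : ∀ k : Fin nc, A *ᵥ (fun j => if P j = k then (1 : ℝ) else 0) ∈ W := by
    intro k
    set v : ℝ := (t.equivFin.symm ((finCongr hnc).symm k) : ℝ) with hv
    have hvt : v ∈ t := (t.equivFin.symm ((finCongr hnc).symm k)).2
    have hPv : ∀ j, P j = k ↔ c j = v := by
      intro j
      constructor
      · intro h
        have h2 : t.equivFin ⟨c j, hmem j⟩ = (finCongr hnc).symm k := by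
          rw [← h]; simp [hP]
        have h3 : (⟨c j, hmem j⟩ : t) = t.equivFin.symm ((finCongr hnc).symm k) :=
          (Equiv.eq_symm_apply _).mpr h2
        exact congrArg Subtype.val h3
      · intro h
        have : (⟨c j, hmem j⟩ : t) = t.equivFin.symm ((finCongr hnc).symm k) :=
          Subtype.ext h
        simp [hP, this]
    set p : Polynomial ℝ := Lagrange.basis t id v with hp
    have hinjid : Set.InjOn (id : ℝ → ℝ) t := Function.injective_id.injOn
    have hdeg : p.natDegree < nc := by
      rw [hp, Lagrange.natDegree_basis hinjid hvt, hnc]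
      omega
    have heval : ∀ j, (if P j = k then (1 : ℝ) else 0) = p.eval (c j) := by
      intro j
      by_cases h : c j = v
      · rw [if_pos ((hPv j).mpr h), h, hp]
        exact (Lagrange.eval_basis_self (v := id) hinjid hvt).symm
      · rw [if_neg (fun hh => h ((hPv j).mp hh)), hp]
        exact (Lagrange.eval_basis_of_ne (v := id) (fun hh => h hh.symm) (hmem j)).symm
    have hgsum : (fun j => if P j = k then (1 : ℝ) else 0)
        = ∑ m ∈ Finset.range nc, p.coeff m • (fun i => c i ^ m) := by
      funext j
      rw [heval j, Polynomial.eval_eq_sum_range' hdeg]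
      simp [Finset.sum_apply]
    rw [hgsum]
    have : A *ᵥ (∑ m ∈ Finset.range nc, p.coeff m • (fun i => c i ^ m))
        = ∑ m ∈ Finset.range nc, p.coeff m • (A *ᵥ (fun i => c i ^ m)) := by
      simp only [← Matrix.mulVecLin_apply, map_sum, _root_.map_smul]
    rw [this]
    exact W.sum_mem fun m hm =>
      W.smul_mem _ (hApow m (Finset.mem_range.mp hm))
  -- build B and conclude
  refine ⟨nc, hncs, P, hPsurj, Matrix.of (fun m k => ∑ j, A (Function.surjInv hPsurj m) j *
      (if P j = k then (1 : ℝ) else 0)), ?_⟩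
  ext i k
  have hci : c (Function.surjInv hPsurj (P i)) = c i := by
    rw [← hPiff]
    exact Function.surjInv_eq hPsurj (P i)
  have hrow := hg k (Function.surjInv hPsurj (P i)) i hci
  simp only [Matrix.mul_apply, Matrix.of_apply]
  have hR : ∑ m, (if P i = m then (1 : ℝ) else 0) *
      (∑ j, A (Function.surjInv hPsurj m) j * (if P j = k then (1 : ℝ) else 0))
      = ∑ j, A (Function.surjInv hPsurj (P i)) j * (if P j = k then (1 : ℝ) else 0) := by
    rw [Finset.sum_eq_single (P i)]
    · simp
    · intro m _ hm
      rw [if_neg (fun h => hm h.symm), zero_mul]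
    · intro h; exact absurd (Finset.mem_univ _) h
  rw [hR]
  simpa [Matrix.mulVec, dotProduct] using hrow.symm
end

section
/- Suppose an explicit Runge–Kutta method (A,b) with c = A e has block structure A = [[0,0,0],[A₂₁,A₂₂,0],[A₃₁,A₃₂,A₃₃]] with A₂₂ of size (q−1)×(q−1), that c₁=0 and c₂,…,c_{q+1} are distinct, that some L satisfies both Sylvester equations A₃₃L − L W_U V_U^{−1} = (A₃₃ V_L − W_L) V_U^{−1} and L A₂₂ − A₃₃ L = A₃₂, and that b = [1,0; 0,−L^T; 0,I] β for some β. Then for every k with 1 ≤ k ≤ q and every j ≥ 0, b^T A^j τ⁽ᵏ⁾ = 0, where τ⁽ᵏ⁾ = A c^{k−1} − (1/k) c^k; i.e., the method has weak stage order at least q. -/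
/-!
Let `G` be the set of vectors `[0; y_U; L y_U]`. Because `b = [β₀; -Lᵀβ; β]`, the vector `b` is
orthogonal to `G`, and strict lower triangularity together with `L A₂₂ - A₃₃ L = A₃₂` makes `G`
invariant under `A`; so it suffices that every `τ⁽ᵏ⁾` lies in `G`. For `k = 1`,
`τ⁽¹⁾ = A e - c = 0`. For `k ≥ 2`, `τ⁽ᵏ⁾` is a column of `A [0; V_U; V_L] - [0; W_U; W_L]`.
Multiplying the first Sylvester equation by `V_U` (a scaled Vandermonde matrix, invertible because
`c₁ = 0, c₂, …, c_{q+1}` are distinct) and adding the second one times `V_U` gives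
`A₃₂ V_U + A₃₃ V_L - W_L = L (A₂₂ V_U - W_U)`, which says exactly that these columns lie in `G`.
-/

open Matrix

def IsBlockPartition {n m p : Type*} (z : n) (e₂ : m → n) (e₃ : p → n) : Prop :=
  Function.Bijective (Sum.elim (fun _ : Unit => z) (Sum.elim e₂ e₃))

section BlockGraph

variable {R n m p : Type*} [CommRing R] [Fintype m]

/-- In block notation, the vectors `[0; y; L y]`. -/
def blockGraph (z : n) (e₂ : m → n) (e₃ : p → n) (L : Matrix p m R) : Set (n → R) :=
  {y | y z = 0 ∧ y ∘ e₃ = L *ᵥ (y ∘ e₂)}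

variable {z : n} {e₂ : m → n} {e₃ : p → n} {L : Matrix p m R}

theorem col_mem_blockGraph {k : Type*} {M : Matrix n k R} (hM₁ : M z = 0)
    (hM : M.submatrix e₃ id = L * M.submatrix e₂ id) (j : k) :
    M.col j ∈ blockGraph z e₂ e₃ L :=
  ⟨congrFun hM₁ j, funext fun i => congrFun (congrFun hM i) j⟩

variable [Fintype n] [Fintype p]

theorem sum_eq_add_sum_add_sum {M : Type*} [AddCommMonoid M]
    (h : IsBlockPartition z e₂ e₃) (f : n → M) :
    ∑ t, f t = f z + ∑ i, f (e₂ i) + ∑ i, f (e₃ i) := by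
  rw [← Fintype.sum_bijective _ h (f ∘ Sum.elim (fun _ => z) (Sum.elim e₂ e₃)) f fun _ => rfl]
  simp [Fintype.sum_sum_type, add_assoc]

theorem mulVec_comp_of_apply_eq_zero {k l : Type*}
    (h : IsBlockPartition z e₂ e₃)
    (A : Matrix l n R) {y : n → R} (hy : y z = 0) (r : k → l) :
    (A *ᵥ y) ∘ r = A.submatrix r e₂ *ᵥ (y ∘ e₂) + A.submatrix r e₃ *ᵥ (y ∘ e₃) := by
  funext i
  simp [mulVec, dotProduct, sum_eq_add_sum_add_sum h, hy]

theorem submatrix_mul_of_row_eq_zero {k l o : Type*}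
    (h : IsBlockPartition z e₂ e₃)
    (A : Matrix l n R) {X : Matrix n o R} (hX : X z = 0) (r : k → l) :
    (A * X).submatrix r id
      = A.submatrix r e₂ * X.submatrix e₂ id + A.submatrix r e₃ * X.submatrix e₃ id := by
  ext i j
  simp [mul_apply, sum_eq_add_sum_add_sum h, hX]

theorem dotProduct_eq_zero_of_mem_blockGraph
    (h : IsBlockPartition z e₂ e₃)
    {b : n → R} {β : p → R} (hb₂ : b ∘ e₂ = -(β ᵥ* L)) (hb₃ : b ∘ e₃ = β) {y : n → R}
    (hy : y ∈ blockGraph z e₂ e₃ L) : b ⬝ᵥ y = 0 := by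
  obtain ⟨hy₁, hy₃⟩ := hy
  have : b ⬝ᵥ y = (b ∘ e₂) ⬝ᵥ (y ∘ e₂) + (b ∘ e₃) ⬝ᵥ (y ∘ e₃) := by
    simp [dotProduct, sum_eq_add_sum_add_sum h, hy₁]
  rw [this, hb₂, hb₃, hy₃, dotProduct_mulVec, neg_dotProduct, neg_add_cancel]

variable {A : Matrix n n R}

theorem mulVec_mem_blockGraph
    (h : IsBlockPartition z e₂ e₃)
    (hA₁ : A z = 0) (hA₂₃ : A.submatrix e₂ e₃ = 0)
    (hL : L * A.submatrix e₂ e₂ - A.submatrix e₃ e₃ * L = A.submatrix e₃ e₂) {y : n → R}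
    (hy : y ∈ blockGraph z e₂ e₃ L) : A *ᵥ y ∈ blockGraph z e₂ e₃ L := by
  obtain ⟨hy₁, hy₃⟩ := hy
  refine ⟨by simp [mulVec, hA₁], ?_⟩
  rw [mulVec_comp_of_apply_eq_zero h A hy₁, mulVec_comp_of_apply_eq_zero h A hy₁, hA₂₃, hy₃,
    ← hL]
  simp [sub_mulVec, mulVec_mulVec]

theorem col_mul_sub_mem_blockGraph {k : Type*}
    (h : IsBlockPartition z e₂ e₃)
    (hA₁ : A z = 0) (hA₂₃ : A.submatrix e₂ e₃ = 0) {X Y : Matrix n k R}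
    (hX : X z = 0) (hY : Y z = 0)
    (hXY : A.submatrix e₃ e₂ * X.submatrix e₂ id + A.submatrix e₃ e₃ * X.submatrix e₃ id
        - Y.submatrix e₃ id = L * (A.submatrix e₂ e₂ * X.submatrix e₂ id - Y.submatrix e₂ id))
    (j : k) : (A * X - Y).col j ∈ blockGraph z e₂ e₃ L := by
  refine col_mem_blockGraph (funext fun j => by simp [mul_apply, hA₁, hY]) ?_ j
  change (A * X).submatrix e₃ id - Y.submatrix e₃ id
    = L * ((A * X).submatrix e₂ id - Y.submatrix e₂ id)
  rw [submatrix_mul_of_row_eq_zero h A hX,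
    submatrix_mul_of_row_eq_zero h A hX, hA₂₃, Matrix.zero_mul, add_zero, hXY]

end BlockGraph

theorem dotProduct_vecMul_pow_eq_zero {R n : Type*} [CommSemiring R] [Fintype n] [DecidableEq n]
    {P : Set (n → R)} {A : Matrix n n R} {b τ : n → R} (hb : ∀ y ∈ P, b ⬝ᵥ y = 0)
    (hA : ∀ y ∈ P, A *ᵥ y ∈ P) (hτ : τ ∈ P) (j : ℕ) : (b ᵥ* (A ^ j)) ⬝ᵥ τ = 0 := by
  rw [← dotProduct_mulVec]
  refine hb _ ?_
  induction j with
  | zero => simpa using hτ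
  | succ j ih => simpa [pow_succ', ← mulVec_mulVec] using hA _ ih

theorem mul_add_mul_sub_eq_of_sylvester {R m p : Type*} [CommRing R] [Fintype m] [DecidableEq m]
    [Fintype p] {A₂₂ V₁ W₁ : Matrix m m R} {A₃₂ L V₂ W₂ : Matrix p m R} {A₃₃ : Matrix p p R}
    (hV : IsUnit V₁.det)
    (h₁ : A₃₃ * L - L * (W₁ * V₁⁻¹) = (A₃₃ * V₂ - W₂) * V₁⁻¹)
    (h₂ : L * A₂₂ - A₃₃ * L = A₃₂) :
    A₃₂ * V₁ + A₃₃ * V₂ - W₂ = L * (A₂₂ * V₁ - W₁) := by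
  have h₁' := congrArg (· * V₁) h₁
  simp only [Matrix.sub_mul, Matrix.mul_assoc, nonsing_inv_mul _ hV, Matrix.mul_one] at h₁'
  rw [← h₂, add_sub_assoc, ← h₁', Matrix.sub_mul, Matrix.mul_sub, Matrix.mul_assoc,
    Matrix.mul_assoc]
  abel

theorem isUnit_det_pow_succ_of_injective {K : Type*} [Field K] {m : ℕ} {v : Fin m → K}
    (hv : Function.Injective v) (hv₀ : ∀ i, v i ≠ 0) :
    IsUnit (Matrix.of fun i j : Fin m => v i ^ ((j : ℕ) + 1)).det := by
  have : (Matrix.of fun i j : Fin m => v i ^ ((j : ℕ) + 1)) = diagonal v * vandermonde v := by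
    ext i j
    simp [diagonal_mul, vandermonde, pow_succ']
  rw [this, det_mul, det_diagonal, isUnit_iff_ne_zero]
  exact mul_ne_zero (Finset.prod_ne_zero_iff.mpr fun i _ => hv₀ i)
    (det_vandermonde_ne_zero_iff.mpr hv)

theorem Fin.isBlockPartition {s q : ℕ} (hq : 1 ≤ q) (hqs : q ≤ s) {z : Fin s}
    (hz : (z : ℕ) = 0) {e₂ : Fin (q - 1) → Fin s} (he₂ : ∀ i, (e₂ i : ℕ) = i + 1)
    {e₃ : Fin (s - q) → Fin s} (he₃ : ∀ i, (e₃ i : ℕ) = i + q) :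
    IsBlockPartition z e₂ e₃ := by
  rw [IsBlockPartition, Fintype.bijective_iff_injective_and_card]
  refine ⟨?_, by simp only [Fintype.card_sum, Fintype.card_unique, Fintype.card_fin]; omega⟩
  rintro (_ | x | x) (_ | y | y) h <;>
    simp only [Sum.elim_inl, Sum.elim_inr, Sum.inl.injEq, Sum.inr.injEq, reduceCtorEq, Fin.ext_iff,
      hz, he₂, he₃] at h ⊢ <;> omega

theorem isUnit_det_of_distinct_abscissae {K : Type*} [Field K] {s q : ℕ} {c : Fin s → K}
    (hdist : ∀ i j : Fin s, (i : ℕ) ≤ q → (j : ℕ) ≤ q → i ≠ j → c i ≠ c j)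
    {z : Fin s} (hz : (z : ℕ) = 0) (hcz : c z = 0)
    {e₂ : Fin (q - 1) → Fin s} (he₂ : ∀ i, (e₂ i : ℕ) = i + 1) :
    IsUnit (Matrix.of fun i j : Fin (q - 1) => c (e₂ i) ^ ((j : ℕ) + 1)).det := by
  have hle : ∀ i, (e₂ i : ℕ) ≤ q := fun i => by have := i.isLt; have := he₂ i; omega
  refine isUnit_det_pow_succ_of_injective (fun i i' hii' => ?_) (fun i hi => ?_)
  · by_contra hne
    exact hdist _ _ (hle i) (hle i') (by simpa [Fin.ext_iff, he₂] using hne) hii'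
  · exact hdist _ z (hle i) (by omega) (by simp [Fin.ext_iff, he₂, hz]) (hi.trans hcz.symm)

theorem wso_ge_q_of_sylvester_general (s q : ℕ) (hqs : q < s)
    (A : Matrix (Fin s) (Fin s) ℝ) (b : Fin s → ℝ)
    (hA : ∀ i j : Fin s, i ≤ j → A i j = 0)
    (c : Fin s → ℝ) (hc : c = A *ᵥ (1 : Fin s → ℝ))
    (hc1 : ∀ k : Fin s, (k : ℕ) = 0 → c k = 0)
    (hdist : ∀ i j : Fin s, (i : ℕ) ≤ q → (j : ℕ) ≤ q → i ≠ j → c i ≠ c j)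
    (e2 : Fin (q - 1) → Fin s) (he2 : ∀ i, (e2 i : ℕ) = (i : ℕ) + 1)
    (e3 : Fin (s - q) → Fin s) (he3 : ∀ i, (e3 i : ℕ) = (i : ℕ) + q)
    (L : Matrix (Fin (s - q)) (Fin (q - 1)) ℝ)
    (VU WU : Matrix (Fin (q - 1)) (Fin (q - 1)) ℝ)
    (VL WL : Matrix (Fin (s - q)) (Fin (q - 1)) ℝ)
    (hVU : ∀ i j, VU i j = c (e2 i) ^ ((j : ℕ) + 1))
    (hWU : ∀ i j, WU i j = c (e2 i) ^ ((j : ℕ) + 2) / ((j : ℕ) + 2))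
    (hVL : ∀ i j, VL i j = c (e3 i) ^ ((j : ℕ) + 1))
    (hWL : ∀ i j, WL i j = c (e3 i) ^ ((j : ℕ) + 2) / ((j : ℕ) + 2))
    (hSyl1 : (Matrix.of fun i j => A (e3 i) (e3 j)) * L - L * (WU * VU⁻¹)
        = ((Matrix.of fun i j => A (e3 i) (e3 j)) * VL - WL) * VU⁻¹)
    (hSyl2 : L * (Matrix.of fun i j => A (e2 i) (e2 j))
          - (Matrix.of fun i j => A (e3 i) (e3 j)) * L
        = Matrix.of fun i j => A (e3 i) (e2 j))
    (β : Fin (s - q) → ℝ)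
    (hb2 : ∀ i, b (e2 i) = -∑ j, L j i * β j)
    (hb3 : ∀ i, b (e3 i) = β i) :
    ∀ k : ℕ, 1 ≤ k → k ≤ q → ∀ j : ℕ,
      (b ᵥ* (A ^ j)) ⬝ᵥ
        (A *ᵥ (fun t => c t ^ (k - 1)) - ((1 : ℝ) / k) • fun t => c t ^ k) = 0 := by
  intro k hk1 hkq
  set z : Fin s := ⟨0, by omega⟩
  have hsplit := Fin.isBlockPartition (by omega) hqs.le (z := z) rfl he2 he3
  have hA₁ : A z = 0 := funext fun t => hA z t (Fin.le_def.mpr t.val.zero_le)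
  have hA₂₃ : A.submatrix e2 e3 = 0 := by
    ext i t; exact hA _ _ (by have := i.isLt; simp only [Fin.le_def, he2, he3]; omega)
  refine dotProduct_vecMul_pow_eq_zero (P := blockGraph z e2 e3 L)
    (fun y => dotProduct_eq_zero_of_mem_blockGraph hsplit (β := β)
      (funext fun i => by simp [hb2, vecMul, dotProduct, mul_comm]) (funext hb3))
    (fun y => mulVec_mem_blockGraph hsplit hA₁ hA₂₃ hSyl2) ?_
  obtain rfl | hk2 := hk1.eq_or_lt
  · have hτ : (A *ᵥ fun t => c t ^ (1 - 1)) - ((1 : ℝ) / (1 : ℕ)) • (fun t => c t ^ 1) = 0 := by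
      simp [hc, ← Pi.one_def]
    exact hτ ▸ ⟨rfl, by simp⟩
  obtain ⟨k, rfl⟩ := Nat.exists_eq_add_of_le' hk2
  -- column `j` of `A * X - Y` is `τ⁽ʲ⁺²⁾`
  set X : Matrix (Fin s) (Fin (q - 1)) ℝ := of fun t j => c t ^ ((j : ℕ) + 1)
  set Y : Matrix (Fin s) (Fin (q - 1)) ℝ := of fun t j => c t ^ ((j : ℕ) + 2) / ((j : ℕ) + 2)
  obtain rfl : VU = X.submatrix e2 id := ext hVU
  obtain rfl : WU = Y.submatrix e2 id := ext hWU
  obtain rfl : VL = X.submatrix e3 id := ext hVL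
  obtain rfl : WL = Y.submatrix e3 id := ext hWL
  have hcz : c z = 0 := hc1 z rfl
  have hk : k < q - 1 := by omega
  have hXY := mul_add_mul_sub_eq_of_sylvester
    (isUnit_det_of_distinct_abscissae hdist rfl hcz he2) hSyl1 hSyl2
  convert col_mul_sub_mem_blockGraph hsplit hA₁ hA₂₃ (X := X) (Y := Y)
    (funext fun j => by simp [X, hcz]) (funext fun j => by simp [Y, hcz]) hXY ⟨k, hk⟩ using 1
  ext t
  simp [X, Y, mul_apply, mulVec, dotProduct, div_eq_inv_mul]

/-- Sufficient conditions for weak stage order at least `q` (Theorem 4.3 of the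
paper): an explicit RK scheme `(A, b)` with `c = A e`, `c₁ = 0`, distinct abscissae
`c₁, …, c_{q+1}`, a matrix `L` solving both Sylvester equations
`A₃₃ L - L W_U V_U⁻¹ = (A₃₃ V_L - W_L) V_U⁻¹` and `L A₂₂ - A₃₃ L = A₃₂`, and
`b = [1,0; 0,-Lᵀ; 0,I] β`, satisfies `bᵀ Aʲ τ⁽ᵏ⁾ = 0` for all `j ≥ 0` and
`1 ≤ k ≤ q`, where `τ⁽ᵏ⁾ = A c^{k-1} - (1/k) c^k` (entrywise powers); i.e. it has
weak stage order at least `q`.  Blocks of `A` are encoded via the index embeddings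
`e2` (rows/columns `2..q`) and `e3` (rows/columns `q+1..s`). -/
theorem wso_ge_q_of_sylvester (s q : ℕ) (hq : 2 ≤ q) (hqs : q < s)
    (A : Matrix (Fin s) (Fin s) ℝ) (b : Fin s → ℝ)
    (hA : ∀ i j : Fin s, i ≤ j → A i j = 0)
    (c : Fin s → ℝ) (hc : c = A *ᵥ (1 : Fin s → ℝ))
    (hc1 : ∀ k : Fin s, (k : ℕ) = 0 → c k = 0)
    (hdist : ∀ i j : Fin s, (i : ℕ) ≤ q → (j : ℕ) ≤ q → i ≠ j → c i ≠ c j)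
    (e2 : Fin (q - 1) → Fin s) (he2 : ∀ i, (e2 i : ℕ) = (i : ℕ) + 1)
    (e3 : Fin (s - q) → Fin s) (he3 : ∀ i, (e3 i : ℕ) = (i : ℕ) + q)
    (L : Matrix (Fin (s - q)) (Fin (q - 1)) ℝ)
    (VU WU : Matrix (Fin (q - 1)) (Fin (q - 1)) ℝ)
    (VL WL : Matrix (Fin (s - q)) (Fin (q - 1)) ℝ)
    (hVU : ∀ i j, VU i j = c (e2 i) ^ ((j : ℕ) + 1))
    (hWU : ∀ i j, WU i j = c (e2 i) ^ ((j : ℕ) + 2) / ((j : ℕ) + 2))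
    (hVL : ∀ i j, VL i j = c (e3 i) ^ ((j : ℕ) + 1))
    (hWL : ∀ i j, WL i j = c (e3 i) ^ ((j : ℕ) + 2) / ((j : ℕ) + 2))
    (hSyl1 : (Matrix.of fun i j => A (e3 i) (e3 j)) * L - L * (WU * VU⁻¹)
        = ((Matrix.of fun i j => A (e3 i) (e3 j)) * VL - WL) * VU⁻¹)
    (hSyl2 : L * (Matrix.of fun i j => A (e2 i) (e2 j))
          - (Matrix.of fun i j => A (e3 i) (e3 j)) * L
        = Matrix.of fun i j => A (e3 i) (e2 j))
    (β0 : ℝ) (β : Fin (s - q) → ℝ)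
    (hb0 : ∀ k : Fin s, (k : ℕ) = 0 → b k = β0)
    (hb2 : ∀ i, b (e2 i) = -∑ j, L j i * β j)
    (hb3 : ∀ i, b (e3 i) = β i) :
    ∀ k : ℕ, 1 ≤ k → k ≤ q → ∀ j : ℕ,
      (b ᵥ* (A ^ j)) ⬝ᵥ
        (A *ᵥ (fun t => c t ^ (k - 1)) - ((1 : ℝ) / k) • fun t => c t ^ k) = 0 :=
  wso_ge_q_of_sylvester_general s q hqs A b hA c hc hc1 hdist e2 he2 e3 he3 L VU WU VL WL hVU hWU
    hVL hWL hSyl1 hSyl2 β hb2 hb3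
end
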